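/- Fix a finite nonempty index set Φ, a nonempty finite outcome set A, a natural number K, for every f ∈ Φ a matrix R^f ∈ ℝ^{A×K} with rows r^f(a), and a probability distribution σ̃ on A. Define the dual objective D(λ) = Σ_{f∈Φ} max_{g∈Φ} ( (Σ_{a∈A} σ̃_a r^g(a)) · λ^f ) + log Z(λ), where Z(λ) = Σ_{a∈A} exp( −Σ_{f∈Φ} r^f(a)·λ^f ). Suppose λ* ∈ (ℝ^K)^Φ attains the infimum of D. Then the Gibbs distribution σ̂ defined by σ̂_a = exp( −Σ_{f∈Φ} r^f(a)·λ*^f ) / Z(λ*) lies in the ICE polytope determined by σ̃ and maximizes the Shannon entropy H over that polytope, with H(σ̂) = D(λ*). -/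

import Mathlib

/-! Since `lstar` minimizes the dual objective `D`, the one-sided derivative of `D` at `lstar` in
every direction `(f, d)` is nonnegative. The derivative of `log Z` in that direction is
`-(σ̂ᵀR^f ⬝ d)` and the one-sided derivative of `max_g (σ̃ᵀR^g ⬝ λ^f)` is the maximum of
`σ̃ᵀR^g ⬝ d` over the maximizing `g`. Hence `σ̂ᵀR^f ⬝ d` is bounded by the support function of
`{σ̃ᵀR^g}` in every direction, and Hahn–Banach makes `σ̂ᵀR^f` a convex combination of the
`σ̃ᵀR^g`: `σ̂` lies in the ICE polytope. The direction `d = -λ*^f` shows that `σ̂ᵀR^f ⬝ λ*^f`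
attains the maximum, which gives `H(σ̂) = D(λ*)`; for any `σ'` in the polytope, Gibbs'
inequality gives `H(σ') ≤ -∑ σ' log σ̂ ≤ D(λ*)`. -/

open Finset

/-- Membership in the ICE polytope determined by `σt`: `σh` is a distribution on
`A` such that for every `f ∈ Φ` there is a probability vector `η ∈ Δ(Φ)` with
`σhᵀR^f = Σ_g η_g σtᵀR^g`. -/
def memICE {Φ A : Type*} [Fintype Φ] [Fintype A] {K : ℕ}
    (R : Φ → A → Fin K → ℝ) (σt σh : A → ℝ) : Prop :=
  σh ∈ stdSimplex ℝ A ∧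
    ∀ f : Φ, ∃ η : Φ → ℝ, η ∈ stdSimplex ℝ Φ ∧
      ∀ k : Fin K, ∑ a, σh a * R f a k = ∑ g, η g * ∑ a, σt a * R g a k

/-- Shannon entropy of a distribution on a finite set, with the convention
`0 · log 0 = 0` (note `Real.log 0 = 0` in Mathlib). -/
noncomputable def shannonEntropy {A : Type*} [Fintype A] (σ : A → ℝ) : ℝ :=
  -∑ a, σ a * Real.log (σ a)

/-- The partition function of the Gibbs family associated with the regret
matrices `R` and dual multipliers `l`. -/
noncomputable def partitionFn {Φ A : Type*} [Fintype Φ] [Fintype A]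
    {K : ℕ} (R : Φ → A → Fin K → ℝ) (l : Φ → Fin K → ℝ) : ℝ :=
  ∑ a, Real.exp (-∑ f : Φ, ∑ k, R f a k * l f k)

/-- The dual objective of the MaxEnt ICE problem determined by `σt`. -/
noncomputable def dualObj {Φ A : Type*} [Fintype Φ] [Nonempty Φ] [Fintype A]
    {K : ℕ} (R : Φ → A → Fin K → ℝ) (σt : A → ℝ) (l : Φ → Fin K → ℝ) : ℝ :=
  (∑ f : Φ, univ.sup' univ_nonempty
      (fun g : Φ => ∑ k, (∑ a, σt a * R g a k) * l f k)) +
    Real.log (partitionFn R l)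

open Matrix Filter Topology Real

lemma sum_apply_update {ι β M : Type*} [Fintype ι] [DecidableEq ι] [AddCommGroup M]
    (h : ι → β → M) (l : ι → β) (j : ι) (v : β) :
    ∑ i, h i (Function.update l j v i) = ∑ i, h i (l i) + (h j v - h j (l j)) := by
  simp only [Function.apply_update h, sum_update_of_mem (mem_univ j)]
  rw [← add_sum_erase _ _ (mem_univ j), sdiff_singleton_eq_erase]
  abel

lemma mul_sub_log_le_sub {p q : ℝ} (hp : 0 ≤ p) (hq : 0 < q) :
    p * (log q - log p) ≤ q - p := by
  rcases hp.eq_or_lt with rfl | hp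
  · simpa using hq.le
  calc p * (log q - log p) = p * log (q / p) := by rw [log_div hq.ne' hp.ne']
    _ ≤ p * (q / p - 1) := by gcongr; exact log_le_sub_one_of_pos (div_pos hq hp)
    _ = q - p := by field_simp

lemma shannonEntropy_le_neg_sum_mul_log {A : Type*} [Fintype A] {p q : A → ℝ}
    (hp : p ∈ stdSimplex ℝ A) (hq : ∀ a, 0 < q a) (hqs : ∑ a, q a ≤ 1) :
    shannonEntropy p ≤ -∑ a, p a * log (q a) := by
  have : ∑ a, p a * (log (q a) - log (p a)) ≤ 0 := calc
    _ ≤ ∑ a, (q a - p a) := sum_le_sum fun a _ => mul_sub_log_le_sub (hp.1 a) (hq a)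
    _ ≤ 0 := by rw [sum_sub_distrib, hp.2]; linarith
  simp only [mul_sub, sum_sub_distrib] at this
  rw [shannonEntropy]
  linarith

lemma le_of_hasDerivAt_of_eventually_le {L : ℝ → ℝ} {L' m x : ℝ} (hL : HasDerivAt L L' x)
    (h : ∀ᶠ t in 𝓝[>] x, L x + (t - x) * m ≤ L t) : m ≤ L' := by
  refine ge_of_tendsto ((hasDerivAt_iff_tendsto_slope.mp hL).mono_left (nhdsGT_le_nhdsNE x)) ?_
  filter_upwards [h, self_mem_nhdsWithin] with t ht hxt
  rw [slope_def_field, le_div_iff₀ (sub_pos.2 hxt)]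
  linarith

lemma hasDerivAt_log_sum_exp {A : Type*} [Fintype A] [Nonempty A] (s w : A → ℝ) :
    HasDerivAt (fun t => log (∑ a, exp (s a + t * w a)))
      ((∑ a, exp (s a) * w a) / ∑ a, exp (s a)) 0 := by
  have hZ : HasDerivAt (fun t => ∑ a, exp (s a + t * w a)) (∑ a, exp (s a) * w a) 0 :=
    HasDerivAt.fun_sum fun a _ => by
      simpa using (((hasDerivAt_id (0 : ℝ)).mul_const (w a)).const_add (s a)).exp
  simpa using hZ.log (sum_pos (fun a _ => exp_pos _) univ_nonempty).ne'

section SupportFunction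

variable {ι n : Type*} [Fintype ι] [Nonempty ι] [Fintype n]

noncomputable def supportFn (u : ι → n → ℝ) (v : n → ℝ) : ℝ :=
  univ.sup' univ_nonempty fun i => u i ⬝ᵥ v

open Classical in
noncomputable def argmaxes (c : ι → ℝ) : Finset ι :=
  univ.filter fun i => c i = univ.sup' univ_nonempty c

lemma mem_argmaxes {c : ι → ℝ} {i : ι} : i ∈ argmaxes c ↔ c i = univ.sup' univ_nonempty c := by
  simp [argmaxes]

lemma argmaxes_nonempty (c : ι → ℝ) : (argmaxes c).Nonempty :=
  let ⟨i, _, hi⟩ := exists_mem_eq_sup' univ_nonempty c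
  ⟨i, mem_argmaxes.2 hi.symm⟩

lemma sup'_argmaxes_neg (c : ι → ℝ) :
    (argmaxes c).sup' (argmaxes_nonempty c) (fun i => -c i) = -univ.sup' univ_nonempty c := by
  rw [sup'_congr _ rfl fun i hi => by rw [mem_argmaxes.1 hi], sup'_const]

lemma eventually_sup'_add_mul_le (c b : ι → ℝ) :
    ∀ᶠ t in 𝓝[>] (0 : ℝ), univ.sup' univ_nonempty (fun i => c i + t * b i) ≤
      univ.sup' univ_nonempty c + t * (argmaxes c).sup' (argmaxes_nonempty c) b := by
  set M := univ.sup' univ_nonempty c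
  set B := (argmaxes c).sup' (argmaxes_nonempty c) b
  have : ∀ i, ∀ᶠ t in 𝓝[>] (0 : ℝ), c i + t * b i ≤ M + t * B := by
    intro i
    by_cases hi : i ∈ argmaxes c
    · filter_upwards [self_mem_nhdsWithin] with t (ht : 0 < t)
      have := mul_le_mul_of_nonneg_left (le_sup' b hi) ht.le
      linarith [mem_argmaxes.1 hi]
    · have hlt : c i < M := (le_sup' c (mem_univ i)).lt_of_ne (mt mem_argmaxes.2 hi)
      have hcont : ContinuousAt (fun t : ℝ => c i + t * (b i - B)) 0 := by fun_prop
      filter_upwards [nhdsWithin_le_nhds (hcont.eventually_lt continuousAt_const (by simpa))]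
        with t ht
      linarith
  filter_upwards [eventually_all.2 this] with t ht
  exact sup'_le _ _ fun i _ => ht i

lemma eventually_supportFn_add_smul_le (u : ι → n → ℝ) (v d : n → ℝ) :
    ∀ᶠ t in 𝓝[>] (0 : ℝ), supportFn u (v + t • d) ≤
      supportFn u v + t * (argmaxes fun i => u i ⬝ᵥ v).sup' (argmaxes_nonempty _)
        fun i => u i ⬝ᵥ d := by
  simpa only [supportFn, dotProduct_add, dotProduct_smul, smul_eq_mul]
    using eventually_sup'_add_mul_le _ _

lemma sum_smul_dotProduct_le_supportFn (u : ι → n → ℝ) {η : ι → ℝ}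
    (hη : η ∈ stdSimplex ℝ ι) (v : n → ℝ) : (∑ i, η i • u i) ⬝ᵥ v ≤ supportFn u v :=
  calc (∑ i, η i • u i) ⬝ᵥ v = ∑ i, η i * (u i ⬝ᵥ v) := by
        simp only [sum_dotProduct, smul_dotProduct, smul_eq_mul]
    _ ≤ ∑ i, η i * supportFn u v :=
        sum_le_sum fun i _ =>
          mul_le_mul_of_nonneg_left (le_sup' (fun i => u i ⬝ᵥ v) (mem_univ i)) (hη.1 i)
    _ = supportFn u v := by rw [← sum_mul, hη.2, one_mul]

lemma exists_mem_stdSimplex_sum_smul_eq (u : ι → n → ℝ) {v : n → ℝ}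
    (h : ∀ d, v ⬝ᵥ d ≤ supportFn u d) : ∃ η ∈ stdSimplex ℝ ι, ∑ i, η i • u i = v := by
  classical
  set C := Fintype.linearCombination ℝ u '' stdSimplex ℝ ι
  have hC : IsCompact C :=
    (isCompact_stdSimplex ℝ ι).image (LinearMap.continuous_of_finiteDimensional _)
  by_contra hv
  obtain ⟨ℓ, s, hℓC, hℓv⟩ := geometric_hahn_banach_closed_point
    ((convex_stdSimplex ℝ ι).linear_image _) hC.isClosed fun ⟨η, hη, he⟩ => hv ⟨η, hη, he⟩
  set d : n → ℝ := fun k => ℓ fun j => if k = j then 1 else 0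
  have hℓ : ∀ x, ℓ x = x ⬝ᵥ d := ℓ.toLinearMap.pi_apply_eq_sum_univ
  have : supportFn u d < s := (sup'_lt_iff _).2 fun i _ => by
    rw [← hℓ]
    exact hℓC _ ⟨Pi.single i 1, single_mem_stdSimplex ℝ i, by
      simp [Fintype.linearCombination_apply, Pi.single_apply]⟩
  linarith [h d, hℓ v]

end SupportFunction

section Gibbs

variable {Φ A : Type*} {K : ℕ} (R : Φ → A → Fin K → ℝ)

noncomputable def expectedRegret [Fintype A] (p : A → ℝ) (f : Φ) (k : Fin K) : ℝ :=
  ∑ a, p a * R f a k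

lemma expectedRegret_dotProduct [Fintype A] (p : A → ℝ) (f : Φ) (v : Fin K → ℝ) :
    expectedRegret R p f ⬝ᵥ v = ∑ a, p a * (R f a ⬝ᵥ v) := by
  simp only [expectedRegret, dotProduct, sum_mul, mul_sum, mul_assoc]
  exact sum_comm

variable [Fintype Φ]

noncomputable def regret (l : Φ → Fin K → ℝ) (a : A) : ℝ :=
  ∑ f, R f a ⬝ᵥ l f

lemma regret_update [DecidableEq Φ] (l : Φ → Fin K → ℝ) (f : Φ) (d : Fin K → ℝ) (t : ℝ)
    (a : A) : regret R (Function.update l f (l f + t • d)) a = regret R l a + t * (R f a ⬝ᵥ d) := by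
  rw [regret, sum_apply_update (fun f v => R f a ⬝ᵥ v), dotProduct_add, dotProduct_smul,
    smul_eq_mul, regret]
  ring

variable [Fintype A]

noncomputable def gibbs (l : Φ → Fin K → ℝ) (a : A) : ℝ :=
  exp (-regret R l a) / partitionFn R l

lemma partitionFn_eq (l : Φ → Fin K → ℝ) : partitionFn R l = ∑ a, exp (-regret R l a) := rfl

variable [Nonempty A]

lemma partitionFn_pos (l : Φ → Fin K → ℝ) : 0 < partitionFn R l :=
  sum_pos (fun _ _ => exp_pos _) univ_nonempty

lemma gibbs_pos (l : Φ → Fin K → ℝ) (a : A) : 0 < gibbs R l a :=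
  div_pos (exp_pos _) (partitionFn_pos R l)

lemma sum_gibbs (l : Φ → Fin K → ℝ) : ∑ a, gibbs R l a = 1 := by
  simp only [gibbs]
  rw [← sum_div, ← partitionFn_eq, div_self (partitionFn_pos R l).ne']

lemma gibbs_mem_stdSimplex (l : Φ → Fin K → ℝ) : gibbs R l ∈ stdSimplex ℝ A :=
  ⟨fun a => (gibbs_pos R l a).le, sum_gibbs R l⟩

lemma neg_sum_mul_log_gibbs (l : Φ → Fin K → ℝ) {p : A → ℝ} (hp : ∑ a, p a = 1) :
    -∑ a, p a * log (gibbs R l a) = ∑ f, expectedRegret R p f ⬝ᵥ l f + log (partitionFn R l) := by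
  have hlog : ∀ a, log (gibbs R l a) = -regret R l a - log (partitionFn R l) := fun a => by
    rw [gibbs, log_div (exp_pos _).ne' (partitionFn_pos R l).ne', log_exp]
  have hregret : ∑ a, p a * regret R l a = ∑ f, expectedRegret R p f ⬝ᵥ l f := by
    simp only [regret, mul_sum]
    rw [sum_comm]
    exact sum_congr rfl fun f _ => (expectedRegret_dotProduct R p f (l f)).symm
  simp only [hlog, mul_sub, mul_neg, sum_sub_distrib, sum_neg_distrib, ← sum_mul, hp, hregret]
  ring

lemma hasDerivAt_log_partitionFn_update [DecidableEq Φ] (l : Φ → Fin K → ℝ) (f : Φ)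
    (d : Fin K → ℝ) :
    HasDerivAt (fun t : ℝ => log (partitionFn R (Function.update l f (l f + t • d))))
      (-(expectedRegret R (gibbs R l) f ⬝ᵥ d)) 0 := by
  have hfun : (fun t : ℝ => log (partitionFn R (Function.update l f (l f + t • d)))) =
      fun t => log (∑ a, exp (-regret R l a + t * -(R f a ⬝ᵥ d))) := by
    funext t
    simp only [partitionFn_eq, regret_update, neg_add, mul_neg]
  have hval : -(expectedRegret R (gibbs R l) f ⬝ᵥ d) =
      (∑ a, exp (-regret R l a) * -(R f a ⬝ᵥ d)) / ∑ a, exp (-regret R l a) := by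
    rw [expectedRegret_dotProduct, ← partitionFn_eq, sum_div, ← sum_neg_distrib]
    exact sum_congr rfl fun a _ => by rw [gibbs]; ring
  rw [hfun, hval]
  exact hasDerivAt_log_sum_exp _ _

end Gibbs

section Dual

variable {Φ A : Type*} [Fintype Φ] [Fintype A] {K : ℕ} (R : Φ → A → Fin K → ℝ) (σt : A → ℝ)

lemma memICE_iff {σ : A → ℝ} :
    memICE R σt σ ↔ σ ∈ stdSimplex ℝ A ∧
      ∀ f, ∃ η ∈ stdSimplex ℝ Φ, ∑ g, η g • expectedRegret R σt g = expectedRegret R σ f := by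
  refine and_congr_right fun _ => forall_congr' fun f => exists_congr fun η =>
    and_congr_right fun _ => ?_
  rw [funext_iff]
  simp only [expectedRegret, Finset.sum_apply, Pi.smul_apply, smul_eq_mul, eq_comm]

variable [Nonempty Φ]

lemma dualObj_eq (l : Φ → Fin K → ℝ) :
    dualObj R σt l = ∑ f, supportFn (expectedRegret R σt) (l f) + log (partitionFn R l) := rfl

lemma memICE.expectedRegret_dotProduct_le {σ : A → ℝ} (h : memICE R σt σ) (f : Φ)
    (v : Fin K → ℝ) : expectedRegret R σ f ⬝ᵥ v ≤ supportFn (expectedRegret R σt) v := by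
  obtain ⟨η, hη, heq⟩ := ((memICE_iff R σt).1 h).2 f
  exact heq ▸ sum_smul_dotProduct_le_supportFn _ hη v

variable [Nonempty A] {lstar : Φ → Fin K → ℝ}

theorem expectedRegret_gibbs_dotProduct_le_of_forall_le
    (hopt : ∀ l, dualObj R σt lstar ≤ dualObj R σt l) (f : Φ) (d : Fin K → ℝ) :
    expectedRegret R (gibbs R lstar) f ⬝ᵥ d ≤
      (argmaxes fun g => expectedRegret R σt g ⬝ᵥ lstar f).sup' (argmaxes_nonempty _)
        fun g => expectedRegret R σt g ⬝ᵥ d := by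
  classical
  rw [← neg_le_neg_iff]
  refine le_of_hasDerivAt_of_eventually_le (hasDerivAt_log_partitionFn_update R lstar f d) ?_
  filter_upwards [eventually_supportFn_add_smul_le (expectedRegret R σt) (lstar f) d] with t ht
  have := hopt (Function.update lstar f (lstar f + t • d))
  rw [dualObj_eq, dualObj_eq, sum_apply_update (fun f v => supportFn (expectedRegret R σt) v)]
    at this
  simp only [zero_smul, add_zero, Function.update_eq_self, sub_zero]
  linarith

theorem memICE_gibbs (hopt : ∀ l, dualObj R σt lstar ≤ dualObj R σt l) :
    memICE R σt (gibbs R lstar) :=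
  (memICE_iff R σt).2 ⟨gibbs_mem_stdSimplex R lstar, fun f =>
    exists_mem_stdSimplex_sum_smul_eq _ fun d =>
      (expectedRegret_gibbs_dotProduct_le_of_forall_le R σt hopt f d).trans
        (sup'_mono _ (subset_univ _) _)⟩

theorem expectedRegret_gibbs_dotProduct_self (hopt : ∀ l, dualObj R σt lstar ≤ dualObj R σt l)
    (f : Φ) : expectedRegret R (gibbs R lstar) f ⬝ᵥ lstar f =
      supportFn (expectedRegret R σt) (lstar f) := by
  refine le_antisymm ((memICE_gibbs R σt hopt).expectedRegret_dotProduct_le R σt f _) ?_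
  have := expectedRegret_gibbs_dotProduct_le_of_forall_le R σt hopt f (-lstar f)
  simp only [dotProduct_neg, sup'_argmaxes_neg] at this
  exact neg_le_neg_iff.1 this

end Dual

theorem maxEntICE_primal_recovery_general
    {Φ A : Type*} [Fintype Φ] [Nonempty Φ] [Fintype A] [Nonempty A]
    {K : ℕ} (R : Φ → A → Fin K → ℝ)
    (σt : A → ℝ)
    (lstar : Φ → Fin K → ℝ)
    (hopt : ∀ l : Φ → Fin K → ℝ, dualObj R σt lstar ≤ dualObj R σt l)
    (σh : A → ℝ)
    (hσh : σh = fun a =>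
      Real.exp (-∑ f : Φ, ∑ k, R f a k * lstar f k) / partitionFn R lstar) :
    memICE R σt σh ∧
      (∀ σ' : A → ℝ, memICE R σt σ' → shannonEntropy σ' ≤ shannonEntropy σh) ∧
      shannonEntropy σh = dualObj R σt lstar := by
  obtain rfl : σh = gibbs R lstar := hσh
  have hent : shannonEntropy (gibbs R lstar) = dualObj R σt lstar := by
    rw [shannonEntropy, neg_sum_mul_log_gibbs R lstar (sum_gibbs R lstar), dualObj_eq]
    simp only [expectedRegret_gibbs_dotProduct_self R σt hopt]
  refine ⟨memICE_gibbs R σt hopt, fun σ hσ => ?_, hent⟩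
  calc shannonEntropy σ ≤ -∑ a, σ a * log (gibbs R lstar a) :=
        shannonEntropy_le_neg_sum_mul_log hσ.1 (gibbs_pos R lstar) (sum_gibbs R lstar).le
    _ = ∑ f, expectedRegret R σ f ⬝ᵥ lstar f + log (partitionFn R lstar) :=
        neg_sum_mul_log_gibbs R lstar hσ.1.2
    _ ≤ dualObj R σt lstar := by
        rw [dualObj_eq]
        gcongr with f
        exact hσ.expectedRegret_dotProduct_le R σt f _
    _ = shannonEntropy (gibbs R lstar) := hent.symm

/-- **Lemma 4 (primal recovery from a dual solution).**
If the dual multipliers `lstar` attain the infimum of the dual objective, then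
the Gibbs distribution `σh_a = exp(−Σ_f r^f(a)·λ*^f)/Z(λ*)` lies in the ICE
polytope determined by `σt`, maximizes the Shannon entropy over that polytope,
and its entropy equals the optimal dual value `D(λ*)`. -/
theorem maxEntICE_primal_recovery
    {Φ A : Type*} [Fintype Φ] [Nonempty Φ] [Fintype A] [Nonempty A]
    {K : ℕ} (R : Φ → A → Fin K → ℝ)
    (σt : A → ℝ) (hσt : σt ∈ stdSimplex ℝ A)
    (lstar : Φ → Fin K → ℝ)
    (hopt : ∀ l : Φ → Fin K → ℝ, dualObj R σt lstar ≤ dualObj R σt l)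
    (σh : A → ℝ)
    (hσh : σh = fun a =>
      Real.exp (-∑ f : Φ, ∑ k, R f a k * lstar f k) / partitionFn R lstar) :
    memICE R σt σh ∧
      (∀ σ' : A → ℝ, memICE R σt σ' → shannonEntropy σ' ≤ shannonEntropy σh) ∧
      shannonEntropy σh = dualObj R σt lstar :=
  maxEntICE_primal_recovery_general R σt lstar hopt σh hσh
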